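/- Consider two groups: n/2 agents of group 1 at location 0 with α_1 = 0, and n/2 agents of group 2 at location 1 with α_2·(n/2 - 1) = 2 - √2. Then the minimizer of the maximum cost MC(y) = max_i c_i(y) over [0,1] is y* = √2/2, and for any y ≤ (1+2√2)/7, MC(y)/MC(y*) ≥ 2(1+2√2)/7. -/

import Mathlib

/-! The second cost dominates `1 - (1 - c) y` (from `|y - 1| ≥ 1 - y`), which decreases in `y`,
while the first one is `|y| ≥ y`; the two lines cross at `y = 1/(2 - c)`, which for
`c = 2 - √2` is `√2/2`, with value `√2/2`. Left of `(1 + 2√2)/7` the second cost is therefore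
at least `(4 + √2)/7`, and `((4 + √2)/7) / (√2/2) = 2(1 + 2√2)/7`. -/

noncomputable def twoGroupMaxCost (c y : ℝ) : ℝ := max |y| ((1 - c) * |y - 1| + c)

section

variable {c : ℝ}

lemma one_sub_mul_le_twoGroupMaxCost (hc : c ≤ 1) {y t : ℝ} (hyt : y ≤ t) :
    1 - (1 - c) * t ≤ twoGroupMaxCost c y := by
  have h : 1 - y ≤ |y - 1| := by rw [abs_sub_comm]; exact le_abs_self _
  exact le_max_of_le_right (by nlinarith)

lemma inv_two_sub_le_twoGroupMaxCost (hc : c ≤ 1) (y : ℝ) :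
    (2 - c)⁻¹ ≤ twoGroupMaxCost c y := by
  have h₁ : y ≤ twoGroupMaxCost c y := (le_abs_self y).trans (le_max_left _ _)
  have h₂ : 1 - (1 - c) * y ≤ twoGroupMaxCost c y := one_sub_mul_le_twoGroupMaxCost hc le_rfl
  rw [inv_le_iff_one_le_mul₀' (by linarith)]
  -- `(1 - c) * h₁ + h₂` eliminates `y`: `(2 - c) * twoGroupMaxCost c y ≥ 1`
  nlinarith

lemma twoGroupMaxCost_inv_two_sub (hc : c ≤ 1) :
    twoGroupMaxCost c (2 - c)⁻¹ = (2 - c)⁻¹ := by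
  have hpos : 0 < 2 - c := by linarith
  have hle : (2 - c)⁻¹ ≤ 1 := inv_le_one_of_one_le₀ (by linarith)
  rw [twoGroupMaxCost, abs_of_pos (inv_pos.2 hpos), abs_of_nonpos (by linarith)]
  have h : (1 - c) * -((2 - c)⁻¹ - 1) + c = (2 - c)⁻¹ := by field_simp; ring
  rw [h, max_self]

end

theorem mc_group_lower_bound_profile (c2 : ℝ) (hc2 : c2 = 2 - Real.sqrt 2)
    (MC : ℝ → ℝ) (hMC : ∀ y, MC y = max |y| ((1 - c2) * |y - 1| + c2)) :
    (∀ y ∈ Set.Icc (0:ℝ) 1, MC (Real.sqrt 2 / 2) ≤ MC y) ∧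
    (∀ y ∈ Set.Icc (0:ℝ) ((1 + 2 * Real.sqrt 2) / 7),
      2 * (1 + 2 * Real.sqrt 2) / 7 ≤ MC y / MC (Real.sqrt 2 / 2)) := by
  have hMC' : MC = twoGroupMaxCost c2 := funext hMC
  have hc2_le : c2 ≤ 1 := by rw [hc2]; linarith [Real.one_lt_sqrt_two]
  have hstar : Real.sqrt 2 / 2 = (2 - c2)⁻¹ := by
    rw [hc2, sub_sub_cancel, ← Real.sqrt_div_self]
  have hopt : MC (Real.sqrt 2 / 2) = Real.sqrt 2 / 2 := by
    rw [hMC', hstar, twoGroupMaxCost_inv_two_sub hc2_le]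
  refine ⟨fun y _ => ?_, fun y hy => ?_⟩
  · rw [hopt, hMC', hstar]
    exact inv_two_sub_le_twoGroupMaxCost hc2_le y
  · rw [hopt, le_div_iff₀ (by positivity)]
    calc 2 * (1 + 2 * Real.sqrt 2) / 7 * (Real.sqrt 2 / 2)
        = 1 - (1 - c2) * ((1 + 2 * Real.sqrt 2) / 7) := by
          rw [hc2]; ring_nf; rw [Real.sq_sqrt zero_le_two]; ring
      _ ≤ MC y := hMC' ▸ one_sub_mul_le_twoGroupMaxCost hc2_le hy.2
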